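/- Let Q_n be a Heine-Stieltjes polynomial of degree n (a polynomial solution of the generalized Lamé equation with Van Vleck polynomial V_n), let ε > 0, and let z_0 be a zero of Q_n lying at distance at least ε from the set 𝒜 ∪ 𝒱_n of zeros of A and V_n. If γ is the largest connected vertical trajectory arc of the quadratic differential ϖ_n = -(V_n/A)(dz)² through z_0 staying at distance ≥ ε from 𝒜 ∪ 𝒱_n, and along γ every bead of the associated necklace contains exactly one zero of Q_n, then the ϖ_n-length of γ satisfies ‖γ‖_{ϖ_n} ≤ (n+2)/λ_n, where λ_n = n + (α-1)/2 and ‖γ‖_{ϖ_n} = (1/π)∫_γ |V_n/A|^{1/2}(z)|dz|. -/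

import Mathlib

open Polynomial Complex MeasureTheory intervalIntegral

/-!
Pairwise disjoint beads, each holding a zero of `Q_n`, hold distinct zeros, so there are at most
`n` of them. Since the `ϖ_n`-length is additive along `γ`, the arc is covered by the `m - 1` gaps
between consecutive beads, each of `ϖ_n`-length `1/λ_n`, plus the two end pieces of length at most
`1/λ_n`; hence `λ_n ‖γ‖ ≤ m + 1 ≤ n + 2`.
-/

theorem Polynomial.card_le_natDegree_of_pairwise_disjoint {R ι : Type*} [CommRing R] [IsDomain R]
    [Fintype ι] {p : R[X]} (hp : p ≠ 0) {ω : ι → Set R}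
    (hdisj : ∀ i j, i ≠ j → Disjoint (ω i) (ω j)) (hroot : ∀ i, ∃ z ∈ ω i, p.IsRoot z) :
    Fintype.card ι ≤ p.natDegree := by
  classical
  choose z hzω hzroot using hroot
  have hinj : Function.Injective z := fun i j hij => by
    by_contra hne
    exact (hdisj i j hne).ne_of_mem (hzω i) (hzω j) hij
  calc Fintype.card ι
      ≤ p.roots.toFinset.card :=
        Finset.card_le_card_of_injOn z
          (fun i _ => Multiset.mem_toFinset.mpr ((mem_roots hp).mpr (hzroot i))) hinj.injOn
    _ ≤ Multiset.card p.roots := p.roots.toFinset_card_le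
    _ ≤ p.natDegree := p.card_roots'

theorem intervalIntegral.integral_add_adjacent_intervals_of_continuousOn {E : Type*}
    [NormedAddCommGroup E] [NormedSpace ℝ E] {f : ℝ → E} {s : Set ℝ} [s.OrdConnected]
    (hf : ContinuousOn f s) {a b c : ℝ} (ha : a ∈ s) (hb : b ∈ s) (hc : c ∈ s) :
    ((∫ x in a..b, f x) + ∫ x in b..c, f x) = ∫ x in a..c, f x :=
  integral_add_adjacent_intervals
    ((hf.mono (Set.OrdConnected.uIcc_subset ‹_› ha hb)).intervalIntegrable)
    ((hf.mono (Set.OrdConnected.uIcc_subset ‹_› hb hc)).intervalIntegrable)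

theorem le_add_one_of_chain {α : Type*} {s : Set α} (L : α → α → ℝ)
    (hadd : ∀ x ∈ s, ∀ y ∈ s, ∀ z ∈ s, L x y + L y z = L x z)
    {a b : α} (ha : a ∈ s) (hb : b ∈ s) {m : ℕ} (hm : 0 < m) (t : Fin m → α) (ht : ∀ j, t j ∈ s)
    (hstep : ∀ (j : ℕ) (hj : j + 1 < m), L (t ⟨j, Nat.lt_of_succ_lt hj⟩) (t ⟨j + 1, hj⟩) ≤ 1)
    (hstart : L a (t ⟨0, hm⟩) ≤ 1) (hend : L (t ⟨m - 1, Nat.sub_lt hm one_pos⟩) b ≤ 1) :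
    L a b ≤ m + 1 := by
  have hprefix : ∀ (j : ℕ) (hj : j < m), L a (t ⟨j, hj⟩) ≤ j + 1 := by
    intro j
    induction j with
    | zero => exact fun _ => by simpa using hstart
    | succ k ih =>
      intro hj
      rw [← hadd a ha (t ⟨k, Nat.lt_of_succ_lt hj⟩) (ht _) _ (ht _)]
      push_cast
      linarith [ih (Nat.lt_of_succ_lt hj), hstep k hj]
  have hlast := hprefix (m - 1) (Nat.sub_lt hm one_pos)
  rw [Nat.cast_pred hm] at hlast
  rw [← hadd a ha _ (ht _) b hb]
  linarith

theorem ContinuousOn.sqrt_norm_eval_div_mul_norm {s : Set ℝ} {V A : ℂ[X]} {γ γ' : ℝ → ℂ}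
    (hγ : ContinuousOn γ s) (hγ' : ContinuousOn γ' s) (hA : ∀ u ∈ s, A.eval (γ u) ≠ 0) :
    ContinuousOn (fun u => Real.sqrt (‖V.eval (γ u)‖ / ‖A.eval (γ u)‖) * ‖γ' u‖) s := by
  have hV : ContinuousOn (fun u => ‖V.eval (γ u)‖) s := (V.continuous.comp_continuousOn hγ).norm
  have hA' : ContinuousOn (fun u => ‖A.eval (γ u)‖) s := (A.continuous.comp_continuousOn hγ).norm
  exact ((hV.div hA' fun u hu => norm_ne_zero_iff.mpr (hA u hu)).sqrt).mul hγ'.norm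

theorem necklace_length_bound_general (n : ℕ)
    (A Vn Qn : Polynomial ℂ)
    (hQdeg : Qn.natDegree = n) (hQne : Qn ≠ 0)
    (lam : ℝ) (hlampos : 0 < lam)
    (ε : ℝ) (hε : 0 < ε)
    (γ γ' : ℝ → ℂ)
    (hder : ∀ t ∈ Set.Icc (0:ℝ) 1, HasDerivAt γ (γ' t) t)
    (h'cont : Continuous γ')
    -- `γ` stays at distance `≥ ε` from the zeros of `A` and `V_n`
    (hfar : ∀ t ∈ Set.Icc (0:ℝ) 1, ∀ w : ℂ, (A.IsRoot w ∨ Vn.IsRoot w) → ε ≤ dist (γ t) w)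
    -- the `ϖ_n`-length function along `γ`
    (len : ℝ → ℝ → ℝ)
    (hlen : ∀ s u : ℝ, len s u = (1 / Real.pi) * ∫ t in s..u,
      Real.sqrt (‖Vn.eval (γ t)‖ / ‖A.eval (γ t)‖) *
        ‖γ' t‖)
    -- the necklace: points `t 0 ≤ t 1 ≤ ... ≤ t (m-1)` along `γ` at `ϖ_n`-distance `1/λ_n`
    (m : ℕ) (hm : 0 < m) (t : Fin m → ℝ)
    (ht : ∀ j, t j ∈ Set.Icc (0:ℝ) 1)
    (hstep : ∀ (j : ℕ) (hj : j + 1 < m),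
      lam * len (t ⟨j, Nat.lt_of_succ_lt hj⟩) (t ⟨j + 1, hj⟩) = 1)
    (hstart : lam * len 0 (t ⟨0, hm⟩) ≤ 1)
    (hend : lam * len (t ⟨m - 1, Nat.sub_lt hm one_pos⟩) 1 ≤ 1)
    -- the beads: pairwise disjoint sets, each containing exactly one zero of `Q_n`
    (ω : Fin m → Set ℂ)
    (hdisj : ∀ i j, i ≠ j → Disjoint (ω i) (ω j))
    (honezero : ∀ j, ∃! z : ℂ, z ∈ ω j ∧ Qn.IsRoot z) :
    len 0 1 ≤ ((n : ℝ) + 2) / lam := by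
  have hA : ∀ u ∈ Set.Icc (0:ℝ) 1, A.eval (γ u) ≠ 0 := fun u hu hroot => by
    have := hfar u hu (γ u) (Or.inl hroot)
    rw [dist_self] at this
    linarith
  have hcont := ContinuousOn.sqrt_norm_eval_div_mul_norm (V := Vn)
    (fun u hu => (hder u hu).continuousAt.continuousWithinAt) h'cont.continuousOn hA
  have hadd : ∀ x ∈ Set.Icc (0:ℝ) 1, ∀ y ∈ Set.Icc (0:ℝ) 1, ∀ z ∈ Set.Icc (0:ℝ) 1,
      lam * len x y + lam * len y z = lam * len x z := fun x hx y hy z hz => by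
    rw [hlen, hlen, hlen, ← mul_add, ← mul_add,
      integral_add_adjacent_intervals_of_continuousOn hcont hx hy hz]
  have hchain : lam * len 0 1 ≤ m + 1 :=
    le_add_one_of_chain (fun x y => lam * len x y) hadd (by norm_num) (by norm_num) hm t ht
      (fun j hj => (hstep j hj).le) hstart hend
  have hmn : m ≤ n := by
    simpa [hQdeg] using Qn.card_le_natDegree_of_pairwise_disjoint hQne hdisj
      fun j => (honezero j).exists
  rw [le_div_iff₀ hlampos]
  have : (m : ℝ) ≤ n := by exact_mod_cast hmn
  linarith

/-- Length bound for the string of a zero-carrying necklace: if `Q_n` is a Heine–Stieltjes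
polynomial of degree `n`, `γ` is a vertical trajectory arc of `ϖ_n = -(V_n/A)(dz)²` staying
at distance `≥ ε` from the zeros of `A` and `V_n`, carrying a necklace of pairwise disjoint
beads at consecutive `ϖ_n`-distances `1/λ_n` each of which contains exactly one zero of
`Q_n`, then the `ϖ_n`-length of `γ` is at most `(n+2)/λ_n`, where `λ_n = n + (α-1)/2`. -/
theorem necklace_length_bound (p n : ℕ) (α : ℝ)
    (A B Vn Qn : Polynomial ℂ)
    (hQdeg : Qn.natDegree = n) (hQne : Qn ≠ 0)
    (hODE : A * derivative (derivative Qn) + B * derivative Qn =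
      C ((n : ℂ) * ((n : ℂ) + (α : ℂ) - 1)) * (Vn * Qn))
    (lam : ℝ) (hlam : lam = (n : ℝ) + (α - 1) / 2) (hlampos : 0 < lam)
    (ε : ℝ) (hε : 0 < ε)
    (γ γ' : ℝ → ℂ)
    (hder : ∀ t ∈ Set.Icc (0:ℝ) 1, HasDerivAt γ (γ' t) t)
    (h'cont : Continuous γ')
    -- `γ` stays at distance `≥ ε` from the zeros of `A` and `V_n`
    (hfar : ∀ t ∈ Set.Icc (0:ℝ) 1, ∀ w : ℂ, (A.IsRoot w ∨ Vn.IsRoot w) → ε ≤ dist (γ t) w)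
    -- the `ϖ_n`-length function along `γ`
    (len : ℝ → ℝ → ℝ)
    (hlen : ∀ s u : ℝ, len s u = (1 / Real.pi) * ∫ t in s..u,
      Real.sqrt (‖Vn.eval (γ t)‖ / ‖A.eval (γ t)‖) *
        ‖γ' t‖)
    -- the necklace: points `t 0 ≤ t 1 ≤ ... ≤ t (m-1)` along `γ` at `ϖ_n`-distance `1/λ_n`
    (m : ℕ) (hm : 0 < m) (t : Fin m → ℝ)
    (ht : ∀ j, t j ∈ Set.Icc (0:ℝ) 1)
    (htmono : ∀ j k : Fin m, j ≤ k → t j ≤ t k)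
    (hstep : ∀ (j : ℕ) (hj : j + 1 < m),
      lam * len (t ⟨j, Nat.lt_of_succ_lt hj⟩) (t ⟨j + 1, hj⟩) = 1)
    (hstart : lam * len 0 (t ⟨0, hm⟩) ≤ 1)
    (hend : lam * len (t ⟨m - 1, Nat.sub_lt hm one_pos⟩) 1 ≤ 1)
    -- the beads: pairwise disjoint sets, each containing exactly one zero of `Q_n`
    (ω : Fin m → Set ℂ)
    (hbead : ∀ j, γ (t j) ∈ ω j)
    (hdisj : ∀ i j, i ≠ j → Disjoint (ω i) (ω j))
    (honezero : ∀ j, ∃! z : ℂ, z ∈ ω j ∧ Qn.IsRoot z) :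
    len 0 1 ≤ ((n : ℝ) + 2) / lam :=
  necklace_length_bound_general n A Vn Qn hQdeg hQne lam hlampos ε hε γ γ' hder h'cont hfar len hlen
    m hm t ht hstep hstart hend ω hdisj honezero
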